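/- Let x : [0,1] → ℝ² and let t ∈ (0,1] be a point at which the left limit x(t⁻) = lim_{r → t⁻} x(r) exists and ‖x(t) − x(t⁻)‖ = s > 0, where ‖·‖ is the Euclidean norm. Let δ ∈ [0, s) and let g : [0,1] → ℝ² be a right-continuous piecewise constant function with finitely many jumps, each jump of g having Euclidean norm at most δ (i.e., ‖g(r) − g(r⁻)‖ ≤ δ for every r where the left limit g(r⁻) exists). Then sup_{r ∈ [0,1]} ‖x(r) − g(r)‖ ≥ (s − δ)/2. -/

import Mathlib

open Filter

/-- The Euclidean norm on ℝ². -/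
noncomputable def eucNorm (v : ℝ × ℝ) : ℝ := Real.sqrt (v.1 ^ 2 + v.2 ^ 2)

/-- `g` is a right-continuous piecewise constant function with finitely many
jumps: there is a finite set `S` of jump points such that `g` takes the same
value at any two points `a ≤ b` whenever `(a, b]` contains no point of `S`. -/
def IsStepFunction (g : ℝ → ℝ × ℝ) : Prop :=
  ∃ S : Finset ℝ, ∀ a b : ℝ, a ≤ b → (∀ r ∈ S, r ∉ Set.Ioc a b) → g a = g b

lemma eucNorm_eq (v : ℝ × ℝ) : eucNorm v = ‖(WithLp.equiv 2 (ℝ × ℝ)).symm v‖ := by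
  rw [eucNorm, WithLp.prod_norm_eq_add (by norm_num : 0 < (2:ENNReal).toReal)]
  simp only [WithLp.equiv_symm_apply, WithLp.toLp_fst, WithLp.toLp_snd, ENNReal.toReal_ofNat]
  rw [Real.sqrt_eq_rpow,
    show ((2:ℝ)) = ((2:ℕ):ℝ) by norm_num, Real.rpow_natCast, Real.rpow_natCast]
  simp [Real.norm_eq_abs, sq_abs]

lemma eucNorm_nonneg (v : ℝ × ℝ) : 0 ≤ eucNorm v := Real.sqrt_nonneg _

lemma eucNorm_neg (v : ℝ × ℝ) : eucNorm (-v) = eucNorm v := by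
  simp [eucNorm, neg_sq]

lemma eucNorm_triangle (u v : ℝ × ℝ) : eucNorm (u + v) ≤ eucNorm u + eucNorm v := by
  simp only [eucNorm_eq]
  exact norm_add_le ((WithLp.equiv 2 (ℝ × ℝ)).symm u) ((WithLp.equiv 2 (ℝ × ℝ)).symm v)

lemma eucNorm_continuous : Continuous eucNorm := by
  unfold eucNorm; fun_prop

/-- If `x : [0,1] → ℝ²` has a left limit `L` at `t ∈ (0,1]` with jump size
`‖x(t) − x(t⁻)‖ = s > 0`, and `g` is a right-continuous piecewise constant
function with finitely many jumps, each of Euclidean norm at most `δ < s`,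
then `sup_{r ∈ [0,1]} ‖x(r) − g(r)‖ ≥ (s − δ)/2`. -/
theorem uniform_distance_to_step_function
    (x : ℝ → ℝ × ℝ) (t : ℝ) (ht : t ∈ Set.Ioc (0 : ℝ) 1)
    (L : ℝ × ℝ) (hL : Tendsto x (nhdsWithin t (Set.Iio t)) (nhds L))
    (s : ℝ) (hs : eucNorm (x t - L) = s) (hspos : 0 < s)
    (δ : ℝ) (hδ : δ ∈ Set.Ico (0 : ℝ) s)
    (g : ℝ → ℝ × ℝ) (hg : IsStepFunction g)
    (hjumps : ∀ r ∈ Set.Ioc (0 : ℝ) 1, ∀ Lg : ℝ × ℝ,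
      Tendsto g (nhdsWithin r (Set.Iio r)) (nhds Lg) → eucNorm (g r - Lg) ≤ δ) :
    ENNReal.ofReal ((s - δ) / 2)
      ≤ ⨆ r : Set.Icc (0 : ℝ) 1, ENNReal.ofReal (eucNorm (x ↑r - g ↑r)) := by
  obtain ⟨ht0, ht1⟩ := ht
  obtain ⟨hδ0, hδs⟩ := hδ
  obtain ⟨S, hS⟩ := hg
  classical
  set T := S.filter (· < t) with hT
  set a : ℝ := if h : T.Nonempty then max (T.max' h) (t - 1) else t - 1 with ha
  have hat : a < t := by
    rw [ha]
    split_ifs with h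
    · apply max_lt ?_ (by linarith)
      exact (Finset.mem_filter.1 (T.max'_mem h)).2
    · linarith
  have hconst : ∀ p q : ℝ, a < p → p ≤ q → q < t → g p = g q := by
    intro p q hap hpq hqt
    apply hS p q hpq
    intro r hr hrIoc
    have hrT : r ∈ T := Finset.mem_filter.2 ⟨hr, lt_of_le_of_lt hrIoc.2 hqt⟩
    have : r ≤ a := by
      rw [ha]; rw [dif_pos ⟨r, hrT⟩]
      exact le_max_of_le_left (T.le_max' r hrT)
    linarith [hrIoc.1]
  set m := (a + t) / 2 with hm
  have ham : a < m := by rw [hm]; linarith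
  have hmt : m < t := by rw [hm]; linarith
  set c := g m with hc
  have hgc : ∀ r ∈ Set.Ioo m t, g r = c := fun r hr =>
    (hconst m r ham hr.1.le hr.2).symm
  have hIoo : Set.Ioo m t ∈ nhdsWithin t (Set.Iio t) :=
    Ioo_mem_nhdsLT_of_mem ⟨hmt, le_refl t⟩
  have hgt : Tendsto g (nhdsWithin t (Set.Iio t)) (nhds c) := by
    refine Tendsto.congr' ?_ tendsto_const_nhds
    filter_upwards [hIoo] with r hr
    exact (hgc r hr).symm
  have hjump : eucNorm (g t - c) ≤ δ := hjumps t ⟨ht0, ht1⟩ c hgt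
  have htri : s ≤ eucNorm (x t - g t) + δ + eucNorm (L - c) := by
    have h1 : x t - L = (x t - g t) + (g t - c) + -(L - c) := by ring
    calc s = eucNorm (x t - L) := hs.symm
      _ = eucNorm ((x t - g t) + (g t - c) + -(L - c)) := by rw [← h1]
      _ ≤ eucNorm ((x t - g t) + (g t - c)) + eucNorm (-(L - c)) := eucNorm_triangle _ _
      _ ≤ eucNorm (x t - g t) + eucNorm (g t - c) + eucNorm (L - c) := by
          rw [eucNorm_neg]
          exact add_le_add_left (eucNorm_triangle _ _) _
      _ ≤ eucNorm (x t - g t) + δ + eucNorm (L - c) := by linarith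
  by_cases hA : (s - δ) / 2 ≤ eucNorm (x t - g t)
  · refine le_trans (ENNReal.ofReal_le_ofReal hA) ?_
    exact le_iSup (fun r : Set.Icc (0:ℝ) 1 => ENNReal.ofReal (eucNorm (x ↑r - g ↑r)))
      ⟨t, ht0.le, ht1⟩
  · push_neg at hA
    have hB : (s - δ) / 2 ≤ eucNorm (L - c) := by linarith
    have htd : Tendsto (fun r => eucNorm (x r - g r)) (nhdsWithin t (Set.Iio t))
        (nhds (eucNorm (L - c))) := by
      apply Tendsto.congr' _ (eucNorm_continuous.tendsto _ |>.comp
        (hL.sub (tendsto_const_nhds (x := c))))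
      filter_upwards [hIoo] with r hr
      simp [Function.comp, hgc r hr]
    apply ENNReal.le_of_forall_pos_le_add
    intro ε hε _
    have hev1 : ∀ᶠ r in nhdsWithin t (Set.Iio t),
        eucNorm (L - c) - ε < eucNorm (x r - g r) :=
      htd.eventually (eventually_gt_nhds (by simpa using (by positivity : (0:ℝ) < ε)))
    have hev2 : Set.Ioo (0:ℝ) t ∈ nhdsWithin t (Set.Iio t) :=
      Ioo_mem_nhdsLT_of_mem ⟨ht0, le_refl t⟩
    obtain ⟨r, hr1, hr2⟩ := (hev1.and (eventually_of_mem hev2 (fun r hr => hr))).exists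
    have hrIcc : r ∈ Set.Icc (0:ℝ) 1 := ⟨hr2.1.le, hr2.2.le.trans ht1⟩
    calc ENNReal.ofReal ((s - δ) / 2)
        ≤ ENNReal.ofReal (eucNorm (x r - g r) + ε) :=
          ENNReal.ofReal_le_ofReal (by linarith)
      _ = ENNReal.ofReal (eucNorm (x r - g r)) + ENNReal.ofReal ε :=
          ENNReal.ofReal_add (eucNorm_nonneg _) ε.coe_nonneg
      _ ≤ (⨆ r : Set.Icc (0:ℝ) 1, ENNReal.ofReal (eucNorm (x ↑r - g ↑r))) + ε := by
          gcongr
          · exact le_iSup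
              (fun r : Set.Icc (0:ℝ) 1 => ENNReal.ofReal (eucNorm (x ↑r - g ↑r)))
              ⟨r, hrIcc⟩
          · simp
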